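/- Let $z < 0$ be real, let $\sigma_{\max} \geq \sigma_{\min} > 0$, and let $y > 0$. Suppose $g : (0, \infty) \to \mathbb{R}$ is a function such that for all $s > 0$, $g(s) = \lim_{n} \frac{1}{n} \sum_{i=1}^{d_n} \frac{z s \sigma_{n,i}}{1 - z s \sigma_{n,i}}$ for eigenvalues $\sigma_{n,i} \in [\sigma_{\min}, \sigma_{\max}]$ with $d_n/n \to y$. Then the fixed point equation $s = 1 + g(s)$ has at most one positive real solution. (Abstract version: if $g(s) = -\int \frac{1}{1 - zs\sigma} zs\sigma\, d\mu(\sigma)$ scaled by $y$ for a probability measure $\mu$ supported on $[\sigma_{\min}, \sigma_{\max}]$, then $s \mapsto s - 1 - g(s)$ is strictly increasing on $(0,\infty)$, hence has at most one root.) -/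
import Mathlib


open MeasureTheory

/-- For `z < 0`, `y > 0` and a probability measure `μ` on `[σmin, σmax]`, `σmin > 0`, the fixed
point equation `s = 1 + g(s)` with `g(s) = y ∫ zsσ/(1-zsσ) dμ(σ)` has at most one positive
solution. -/
theorem stmt4 (σmin σmax y z : ℝ) (hσ : 0 < σmin) (hσ' : σmin ≤ σmax) (hy : 0 < y) (hz : z < 0)
    (μ : Measure ℝ) [IsProbabilityMeasure μ] (hsupp : ∀ᵐ x ∂μ, x ∈ Set.Icc σmin σmax)
    (g : ℝ → ℝ) (hg : ∀ s, 0 < s → g s = y * ∫ x, z * s * x / (1 - z * s * x) ∂μ) :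
    ∀ s₁ s₂, 0 < s₁ → 0 < s₂ → s₁ = 1 + g s₁ → s₂ = 1 + g s₂ → s₁ = s₂ := by
  intro s₁ s₂ h₁ h₂ e₁ e₂
  have hint : ∀ s : ℝ, 0 < s → Integrable (fun x => z * s * x / (1 - z * s * x)) μ := by
    intro s hs
    apply Integrable.mono' (integrable_const (1 : ℝ))
    · exact (Measurable.div (by fun_prop) (by fun_prop)).aestronglyMeasurable
    · filter_upwards [hsupp] with x hx
      have hx1 : 0 < x := lt_of_lt_of_le hσ hx.1
      have hnum : z * s * x < 0 := mul_neg_of_neg_of_pos (mul_neg_of_neg_of_pos hz hs) hx1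
      have hden : (0:ℝ) < 1 - z * s * x := by linarith
      rw [Real.norm_eq_abs, abs_div, abs_of_nonpos hnum.le, abs_of_pos hden, div_le_one hden]
      linarith
  have key : ∀ a b : ℝ, 0 < a → a < b →
      y * ∫ x, z * b * x / (1 - z * b * x) ∂μ ≤ y * ∫ x, z * a * x / (1 - z * a * x) ∂μ := by
    intro a b ha hab
    apply mul_le_mul_of_nonneg_left _ hy.le
    apply integral_mono_ae (hint b (ha.trans hab)) (hint a ha)
    filter_upwards [hsupp] with x hx
    have hx1 : 0 < x := lt_of_lt_of_le hσ hx.1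
    have ha' : z * a * x < 0 := mul_neg_of_neg_of_pos (mul_neg_of_neg_of_pos hz ha) hx1
    have hb' : z * b * x < 0 := mul_neg_of_neg_of_pos (mul_neg_of_neg_of_pos hz (ha.trans hab)) hx1
    have hd1 : (0:ℝ) < 1 - z * a * x := by linarith
    have hd2 : (0:ℝ) < 1 - z * b * x := by linarith
    rw [div_le_div_iff₀ hd2 hd1]
    nlinarith [mul_neg_of_neg_of_pos hz (mul_pos hx1 (sub_pos.mpr hab))]
  rcases lt_trichotomy s₁ s₂ with h | h | h
  · exfalso
    have := key s₁ s₂ h₁ h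
    rw [← hg s₂ h₂, ← hg s₁ h₁] at this
    linarith
  · exact h
  · exfalso
    have := key s₂ s₁ h₂ h
    rw [← hg s₁ h₁, ← hg s₂ h₂] at this
    linarith
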